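/- Let z be a submodular function on I and G a face of Π(z). Then Ψ_z(G) = {A ⊆ I : z(A) < ∞ and x_A = z(A) for every x ∈ G} is a topology on I. If G is the empty face, then Ψ_z(G) = top(z) = {A : z(A) < ∞}. If G is nonempty, then the preorder corresponding to the topology Ψ_z(G) conforms to z. -/

import Mathlib

open scoped Classical

/-- A preorder on `X`, bundled as a reflexive and transitive relation. -/
structure Preo (X : Type*) where
  le : X → X → Prop
  le_refl : ∀ x, le x x
  le_trans : ∀ {x y z}, le x y → le y z → le x z

namespace Preo

variable {X : Type*}

/-- The refinement partial order `P ⪯ Q` on preorders: `x ≤_P y` implies `x ≤_Q y`. -/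
def Le (P Q : Preo X) : Prop := ∀ ⦃a b⦄, P.le a b → Q.le a b

/-- The opposite preorder. -/
def op (P : Preo X) : Preo X where
  le a b := P.le b a
  le_refl x := P.le_refl x
  le_trans h h' := P.le_trans h' h

/-- The meet (pointwise intersection) of two preorders. -/
def meet (P Q : Preo X) : Preo X where
  le a b := P.le a b ∧ Q.le a b
  le_refl x := ⟨P.le_refl x, Q.le_refl x⟩
  le_trans h h' := ⟨P.le_trans h.1 h'.1, Q.le_trans h.2 h'.2⟩

/-- The join of two preorders: zigzag chains, i.e. the reflexive-transitive closure
of the union of the two relations. -/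
def join (P Q : Preo X) : Preo X where
  le a b := Relation.ReflTransGen (fun u v => P.le u v ∨ Q.le u v) a b
  le_refl _ := Relation.ReflTransGen.refl
  le_trans h h' := Relation.ReflTransGen.trans h h'

/-- The bubble relation: `a` and `b` lie in the same bubble of `P`. -/
def bubRel (P : Preo X) (a b : X) : Prop := P.le a b ∧ P.le b a

/-- `R ◁ P` : `R` is a subdivision of `P`, i.e. `R ⪯ P` and `R = P ∧ (P^op ∨ R)`. -/
def Subdiv (R P : Preo X) : Prop := R.Le P ∧ R = P.meet (P.op.join R)

/-- `P ◀ Q` : `Q` is a contraction of `P`, i.e. `P ⪯ Q` and `Q = P ∨ (P^op ∧ Q)`. -/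
def Contr (P Q : Preo X) : Prop := P.Le Q ∧ Q = P.join (P.op.meet Q)

/-- `K` is a convex subset for the preorder `P`. -/
def ConvexIn (P : Preo X) (K : Set X) : Prop :=
  ∀ ⦃x y z⦄, x ∈ K → y ∈ K → P.le x z → P.le z y → z ∈ K

/-- `K` is connected for (the restriction to `K` of) the preorder `P`:
any two of its elements are joined by a zigzag chain of comparabilities within `K`. -/
def ConnectedIn (P : Preo X) (K : Set X) : Prop :=
  ∀ ⦃x y⦄, x ∈ K → y ∈ K →
    Relation.ReflTransGen (fun u v => u ∈ K ∧ v ∈ K ∧ (P.le u v ∨ P.le v u)) x y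

/-- A total preorder. -/
def Total (P : Preo X) : Prop := ∀ a b, P.le a b ∨ P.le b a

/-- `L` is a linear extension of `P`: `L` is total, `P ⪯ L`, and the bubbles coincide. -/
def IsLinExt (P L : Preo X) : Prop :=
  L.Total ∧ P.Le L ∧ ∀ a b, P.bubRel a b ↔ L.bubRel a b

/-- A finite down-set of the preorder `P`. -/
def IsDownset (P : Preo X) (A : Finset X) : Prop :=
  ∀ ⦃x y⦄, y ∈ A → P.le x y → x ∈ A

/-- A convex finite subset of the preorder `P`. -/
def ConvexF (P : Preo X) (C : Finset X) : Prop :=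
  ∀ ⦃x y z⦄, x ∈ C → y ∈ C → P.le x z → P.le z y → z ∈ C

/-- The down-set generated by a finite set `C`. -/
noncomputable def downClosure [Fintype X] (P : Preo X) (C : Finset X) : Finset X :=
  Finset.univ.filter (fun x => ∃ y ∈ C, P.le x y)

/-- The bubble of an element `a`. -/
noncomputable def bubble [Fintype X] (P : Preo X) (a : X) : Finset X :=
  Finset.univ.filter (fun x => P.le a x ∧ P.le x a)

/-- The set of bubbles of `P`. -/
noncomputable def bubbles [Fintype X] (P : Preo X) : Finset (Finset X) :=
  Finset.univ.image (fun a => P.bubble a)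

/-- `R` is a positive sub-preorder of `P`: in any loop
`x = x₀ ≤_R x₁ ≥_P x₂ ≤_R ⋯ ≤_R x_{2k-1} ≥_P x_{2k} = x`,
every descending step `≥_P` is actually `≥_R`. -/
def PositiveSub (R P : Preo X) : Prop :=
  ∀ (k : ℕ) (x : ℕ → X), x (2 * k) = x 0 →
    (∀ i < k, R.le (x (2 * i)) (x (2 * i + 1))) →
    (∀ i < k, P.le (x (2 * i + 2)) (x (2 * i + 1))) →
    ∀ i < k, R.le (x (2 * i + 2)) (x (2 * i + 1))

end Preo

section Submod

variable {I : Type*} [Fintype I] [DecidableEq I]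

/-- A function `z : P(I) → ℝ ∪ {∞}` is submodular if
`z(S ∪ T) + z(S ∩ T) ≤ z(S) + z(T)` for all `S, T`. -/
def Submodular (z : Finset I → WithTop ℝ) : Prop :=
  ∀ S T : Finset I, z (S ∪ T) + z (S ∩ T) ≤ z S + z T

/-- The corestriction `z_{/A}` : `U ↦ z(A ∪ U) − z(A)` (meaningful when `z A ≠ ⊤`). -/
noncomputable def coRes (z : Finset I → WithTop ℝ) (A U : Finset I) : WithTop ℝ :=
  z (A ∪ U) + ((-(z A).untopD 0 : ℝ) : WithTop ℝ)

/-- The extended generalized permutahedron of `z`: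
`x_I = z(I)` and `x_A ≤ z(A)` whenever `z(A) < ∞`. -/
def EGP (z : Finset I → WithTop ℝ) : Set (I → ℝ) :=
  {x | ((∑ i, x i : ℝ) : WithTop ℝ) = z Finset.univ ∧
       ∀ A : Finset I, ((∑ i ∈ A, x i : ℝ) : WithTop ℝ) ≤ z A}

/-- `z` restricted to subsets of `C` decomposes as the product of its restrictions to `S`
and `T`, where `C = S ⊔ T`. -/
def SplitsAlong (z : Finset I → WithTop ℝ) (C S T : Finset I) : Prop :=
  Disjoint S T ∧ S ∪ T = C ∧ ∀ E ⊆ C, z E = z (E ∩ S) + z (E ∩ T)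

/-- `z` restricted to subsets of `C` is indecomposable. -/
def IndecompOn (z : Finset I → WithTop ℝ) (C : Finset I) : Prop :=
  ∀ S T : Finset I, S.Nonempty → T.Nonempty → ¬ SplitsAlong z C S T

/-- `fam` is the partition underlying a factorization of `z` into indecomposable
extended Boolean functions. -/
def IsIndecompFactorization (z : Finset I → WithTop ℝ) (fam : Finset (Finset I)) : Prop :=
  (∀ B ∈ fam, B.Nonempty) ∧
  (∀ B ∈ fam, ∀ B' ∈ fam, B ≠ B' → Disjoint B B') ∧
  fam.sup id = Finset.univ ∧
  (∀ E : Finset I, z E = ∑ B ∈ fam, z (E ∩ B)) ∧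
  ∀ B ∈ fam, IndecompOn z B

/-- A family of finite subsets of `I` forming a topology on `I`. -/
def IsTopologyFam (F : Set (Finset I)) : Prop :=
  ∅ ∈ F ∧ Finset.univ ∈ F ∧ (∀ A ∈ F, ∀ B ∈ F, A ∪ B ∈ F) ∧ ∀ A ∈ F, ∀ B ∈ F, A ∩ B ∈ F

/-- The preorder `P` is compatible with the submodular function `z`. -/
def Compatible (z : Finset I → WithTop ℝ) (P : Preo I) : Prop :=
  (∀ A : Finset I, P.IsDownset A → z A ≠ ⊤) ∧
  ∀ A B : Finset I, P.IsDownset A → P.IsDownset B → A ⊆ B →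
    ∀ C₁ C₂ : Finset I, Disjoint C₁ C₂ → C₁ ∪ C₂ = B \ A →
      (∀ x ∈ C₁, ∀ y ∈ C₂, ¬ P.le x y ∧ ¬ P.le y x) →
      ∀ U ⊆ B \ A, coRes z A U = coRes z A (U ∩ C₁) + coRes z A (U ∩ C₂)

/-- For a convex subset `C` of `P`, the function `z_C : U ↦ z(A ∪ U) − z(A)`, where
`A = (↓C) \ C` with `↓C` the down-set generated by `C`. -/
noncomputable def zConv (z : Finset I → WithTop ℝ) (P : Preo I) (C U : Finset I) :
    WithTop ℝ :=
  coRes z (P.downClosure C \ C) U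

/-- The preorder `P` conforms to the submodular function `z`: it is compatible with `z`
and every product decomposition of `z_C`, for `C` convex in `P`, comes from a
disconnected decomposition of the preorder induced on `C`. -/
def Conforms (z : Finset I → WithTop ℝ) (P : Preo I) : Prop :=
  Compatible z P ∧
  ∀ C : Finset I, P.ConvexF C →
    ∀ C₁ C₂ : Finset I, Disjoint C₁ C₂ → C₁ ∪ C₂ = C →
      (∀ U ⊆ C, zConv z P C U = zConv z P C (U ∩ C₁) + zConv z P C (U ∩ C₂)) →
      ∀ x ∈ C₁, ∀ y ∈ C₂, ¬ P.le x y ∧ ¬ P.le y x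

/-- The preorder `pre(z)` associated to `z`: `x ≤ y` iff every `A` with `z(A) < ∞`
("open set") containing `y` contains `x`. -/
def preZ (z : Finset I → WithTop ℝ) : Preo I where
  le x y := ∀ A : Finset I, z A ≠ ⊤ → y ∈ A → x ∈ A
  le_refl _ := fun _ _ h => h
  le_trans h h' := fun A hA hy => h A hA (h' A hA hy)

/-- The preorder associated (by the Alexandroff correspondence) to a family of subsets. -/
def preOfFam (F : Set (Finset I)) : Preo I where
  le x y := ∀ A ∈ F, y ∈ A → x ∈ A
  le_refl _ := fun _ _ h => h
  le_trans h h' := fun A hA hy => h A hA (h' A hA hy)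

/-- `Alin(P, z)`: the affine space cut out by `x_A = z(A)` for `A` a down-set of `P`. -/
def Alin (z : Finset I → WithTop ℝ) (P : Preo I) : Set (I → ℝ) :=
  {x | ∀ A : Finset I, P.IsDownset A → ((∑ i ∈ A, x i : ℝ) : WithTop ℝ) = z A}

/-- `AlinBu(P, z)`: the affine space cut out by `x_C = z_C(C)` for `C` a bubble of `P`. -/
def AlinBu (z : Finset I → WithTop ℝ) (P : Preo I) : Set (I → ℝ) :=
  {x | ∀ a : I, ((∑ i ∈ P.bubble a, x i : ℝ) : WithTop ℝ) = zConv z P (P.bubble a) (P.bubble a)}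

/-- `Φ_z(P)`: the (possibly empty) face of `Π(z)` cut out by the equalities `x_A = z(A)`
for `A` a down-set of `P`. -/
def Phi (z : Finset I → WithTop ℝ) (P : Preo I) : Set (I → ℝ) :=
  {x | x ∈ EGP z ∧ ∀ A : Finset I, P.IsDownset A → ((∑ i ∈ A, x i : ℝ) : WithTop ℝ) = z A}

/-- `Ψ_z(G)`: the family of sets `A` with `z(A) < ∞` on which `x_A = z(A)` for all `x ∈ G`. -/
def PsiFam (z : Finset I → WithTop ℝ) (G : Set (I → ℝ)) : Set (Finset I) :=
  {A | z A ≠ ⊤ ∧ ∀ x ∈ G, ((∑ i ∈ A, x i : ℝ) : WithTop ℝ) = z A}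

/-- `Ψ_z(G)` as a preorder. -/
def PsiPre (z : Finset I → WithTop ℝ) (G : Set (I → ℝ)) : Preo I :=
  preOfFam (PsiFam z G)

/-- `z_P = ∏_{C ∈ b(P)} z_C`: the product over all bubbles of `P`. -/
noncomputable def zP (z : Finset I → WithTop ℝ) (P : Preo I) : Finset I → WithTop ℝ :=
  fun E => ∑ C ∈ P.bubbles, zConv z P C (E ∩ C)

/-- The restriction `z|_S` of `z` to subsets of `S`. -/
def restrictFn (z : Finset I → WithTop ℝ) (S : Finset I) :
    Finset {x : I // x ∈ S} → WithTop ℝ :=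
  fun U => z (U.map (Function.Embedding.subtype fun x => x ∈ S))

/-- The corestriction `z_{/S}` of `z`, on subsets of `I ∖ S`. -/
noncomputable def coresFn (z : Finset I → WithTop ℝ) (S : Finset I) :
    Finset {x : I // x ∉ S} → WithTop ℝ :=
  fun U => z (S ∪ U.map (Function.Embedding.subtype fun x => x ∉ S)) +
    ((-(z S).untopD 0 : ℝ) : WithTop ℝ)

/-- The restriction `P|_S` of a preorder to `S`. -/
def restrictPre (P : Preo I) (S : Finset I) : Preo {x : I // x ∈ S} where
  le a b := P.le a b
  le_refl a := P.le_refl a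
  le_trans h h' := P.le_trans h h'

/-- The corestriction `P_{/S}` of a preorder, on `I ∖ S`. -/
def coresPre (P : Preo I) (S : Finset I) : Preo {x : I // x ∉ S} where
  le a b := P.le a b
  le_refl a := P.le_refl a
  le_trans h h' := P.le_trans h h'

end Submod

/-!
For `x ∈ Π(z)` the sets `A` with `x_A = z(A)` are closed under `∪` and `∩`, because
`x_{A∪B} + x_{A∩B} = x_A + x_B` while submodularity bounds `z(A ∪ B) + z(A ∩ B)` by `z(A) + z(B)`.
Hence `Ψ_z(G)` is a topology, and every down-set of its preorder lies in `Ψ_z(G)`.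

If `B ∖ A = C₁ ⊔ C₂` with `C₁`, `C₂` mutually incomparable, then `S = A ∪ C₁` and `T = A ∪ C₂`
are down-sets, so `z(S) + z(T) = z(S ∪ T) + z(A)`; uncrossing against `S` and `T` then makes `z`
modular on pairs `X ∈ [A, S]`, `Y ∈ [A, T]`, which is the factorization of `z_{/A}`.
Conversely, if `z_C` factors along `C = C₁ ⊔ C₂`, then with `A = ↓C ∖ C` the sets `A ∪ C₁` and
`A ∪ C₂` are tight on `G` (their union `↓C` and intersection `A` are), so they are open and
separate `C₁` from `C₂`.
-/

namespace WithTop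

lemma coe_eq_and_coe_eq_of_add_le {a b : ℝ} {c d : WithTop ℝ} (hac : (a : WithTop ℝ) ≤ c)
    (hbd : (b : WithTop ℝ) ≤ d) (h : c + d ≤ a + b) : c = a ∧ d = b := by
  have hcd : c + d ≠ ⊤ := ne_top_of_le_ne_top (by simp) h
  lift c to ℝ using (WithTop.add_ne_top.mp hcd).1
  lift d to ℝ using (WithTop.add_ne_top.mp hcd).2
  norm_cast at *
  constructor <;> linarith

lemma add_coe_neg_eq_add_iff {a b c : WithTop ℝ} (r : ℝ) :
    a + ((-r : ℝ) : WithTop ℝ) = (b + ((-r : ℝ) : WithTop ℝ)) + (c + ((-r : ℝ) : WithTop ℝ)) ↔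
      a + r = b + c := by
  have hr : ((-r : ℝ) : WithTop ℝ) + r = 0 := by
    rw [← WithTop.coe_add, neg_add_cancel, WithTop.coe_zero]
  rw [← WithTop.add_right_inj (WithTop.add_ne_top.mpr ⟨coe_ne_top (a := r), coe_ne_top⟩)]
  have hlhs : a + ((-r : ℝ) : WithTop ℝ) + (r + r) = a + r + (((-r : ℝ) : WithTop ℝ) + r) := by
    abel
  have hrhs : b + ((-r : ℝ) : WithTop ℝ) + (c + ((-r : ℝ) : WithTop ℝ)) + (r + r) =
      b + c + (((-r : ℝ) : WithTop ℝ) + r) + (((-r : ℝ) : WithTop ℝ) + r) := by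
    abel
  rw [hlhs, hrhs, hr, add_zero, add_zero, add_zero]

end WithTop

lemma Finset.union_inter_union_of_disjoint {α : Type*} [DecidableEq α] (A : Finset α)
    {C₁ C₂ : Finset α} (h : Disjoint C₁ C₂) : (A ∪ C₁) ∩ (A ∪ C₂) = A := by
  rw [← Finset.union_inter_distrib_left, Finset.disjoint_iff_inter_eq_empty.mp h,
    Finset.union_empty]

namespace Preo

variable {X : Type*} {P : Preo X}

lemma IsDownset.union_of_not_le [DecidableEq X] {A B C₁ C₂ : Finset X} (hA : P.IsDownset A)
    (hB : P.IsDownset B) (hC : C₁ ∪ C₂ = B \ A) (hC₂ : ∀ x ∈ C₂, ∀ y ∈ C₁, ¬ P.le x y) :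
    P.IsDownset (A ∪ C₁) := by
  intro x y hy hxy
  rcases Finset.mem_union.mp hy with hyA | hyC₁
  · exact Finset.mem_union_left _ (hA hyA hxy)
  have hyB : y ∈ B := (Finset.mem_sdiff.mp (hC ▸ Finset.mem_union_left C₂ hyC₁)).1
  by_cases hxA : x ∈ A
  · exact Finset.mem_union_left _ hxA
  rcases Finset.mem_union.mp (hC ▸ Finset.mem_sdiff.mpr ⟨hB hyB hxy, hxA⟩) with hxC₁ | hxC₂
  · exact Finset.mem_union_right _ hxC₁
  · exact absurd hxy (hC₂ x hxC₂ y hyC₁)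

variable [Fintype X] {C : Finset X}

lemma mem_downClosure {x : X} : x ∈ P.downClosure C ↔ ∃ y ∈ C, P.le x y := by
  simp [downClosure]

lemma subset_downClosure : C ⊆ P.downClosure C :=
  fun x hx => mem_downClosure.mpr ⟨x, hx, P.le_refl x⟩

lemma isDownset_downClosure : P.IsDownset (P.downClosure C) := by
  intro x y hy hxy
  obtain ⟨c, hc, hyc⟩ := mem_downClosure.mp hy
  exact mem_downClosure.mpr ⟨c, hc, P.le_trans hxy hyc⟩

lemma ConvexF.isDownset_downClosure_sdiff [DecidableEq X] (hC : P.ConvexF C) :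
    P.IsDownset (P.downClosure C \ C) := by
  intro x y hy hxy
  obtain ⟨hyD, hyC⟩ := Finset.mem_sdiff.mp hy
  obtain ⟨c, hc, hyc⟩ := mem_downClosure.mp hyD
  exact Finset.mem_sdiff.mpr
    ⟨isDownset_downClosure hyD hxy, fun hxC => hyC (hC hxC hc hxy hyc)⟩

end Preo

namespace IsTopologyFam

variable {I : Type*} [Fintype I] [DecidableEq I] {F : Set (Finset I)}

lemma exists_minimal_mem (hF : IsTopologyFam F) (y : I) :
    ∃ O ∈ F, y ∈ O ∧ ∀ x ∈ O, (preOfFam F).le x y := by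
  let nbhds := Finset.univ.filter (fun O => O ∈ F ∧ y ∈ O)
  have hne : nbhds.Nonempty := ⟨Finset.univ, by simpa [nbhds] using hF.2.1⟩
  refine ⟨nbhds.inf' hne id, ?_, by simp [nbhds], ?_⟩
  · exact InfClosed.finsetInf'_mem (fun A hA B hB => hF.2.2.2 A hA B hB) hne
      (fun O hO => (Finset.mem_filter.mp hO).2.1)
  · intro x hx O hO hyO
    exact (Finset.mem_inf' hne).mp hx O (by simp [nbhds, hO, hyO])

lemma mem_of_isDownset (hF : IsTopologyFam F) {A : Finset I}
    (hA : (preOfFam F).IsDownset A) : A ∈ F := by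
  choose O hOF hyO hOle using hF.exists_minimal_mem
  have hA_eq : A.sup O = A := by
    ext x
    simp only [Finset.mem_sup]
    exact ⟨fun ⟨y, hy, hx⟩ => hA hy (hOle y x hx), fun hx => ⟨x, hx, hyO x⟩⟩
  rw [← hA_eq]
  exact Finset.sup_induction hF.1 (fun A hA B hB => hF.2.2.1 A hA B hB) (fun y _ => hOF y)

end IsTopologyFam

section Submodular

variable {I : Type*} [DecidableEq I] {z : Finset I → WithTop ℝ}

lemma coRes_eq_add_iff {A U U₁ U₂ : Finset I} (hA : z A ≠ ⊤) :
    coRes z A U = coRes z A U₁ + coRes z A U₂ ↔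
      z (A ∪ U) + z A = z (A ∪ U₁) + z (A ∪ U₂) := by
  obtain ⟨r, hr⟩ := WithTop.ne_top_iff_exists.mp hA
  simp only [coRes, ← hr, WithTop.untopD_coe]
  exact WithTop.add_coe_neg_eq_add_iff r

lemma Submodular.union_ne_top_and_inter_ne_top (hsub : Submodular z) {S T : Finset I}
    (hS : z S ≠ ⊤) (hT : z T ≠ ⊤) : z (S ∪ T) ≠ ⊤ ∧ z (S ∩ T) ≠ ⊤ :=
  WithTop.add_ne_top.mp (ne_top_of_le_ne_top (WithTop.add_ne_top.mpr ⟨hS, hT⟩) (hsub S T))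

lemma Submodular.add_eq_add_of_modular_pair (hsub : Submodular z) {S T X Y : Finset I}
    (hST : z S + z T = z (S ∪ T) + z (S ∩ T)) (hfin : z S + z T ≠ ⊤)
    (hX : S ∩ T ⊆ X) (hXS : X ⊆ S) (hY : S ∩ T ⊆ Y) (hYT : Y ⊆ T) :
    z (X ∪ Y) + z (S ∩ T) = z X + z Y := by
  have hXY : X ∩ Y = S ∩ T :=
    (Finset.inter_subset_inter hXS hYT).antisymm (Finset.subset_inter hX hY)
  refine le_antisymm (hXY ▸ hsub X Y) ?_
  rcases eq_or_ne (z (X ∪ Y)) ⊤ with htop | hXYfin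
  · simp [htop]
  -- uncross `X ∪ Y` with `S`, then `S ∪ Y` with `T`
  have h₁ : z (S ∪ Y) + z X ≤ z (X ∪ Y) + z S := by
    have e₁ : X ∪ Y ∪ S = S ∪ Y := by grind
    have e₂ : (X ∪ Y) ∩ S = X := by grind
    simpa [e₁, e₂] using hsub (X ∪ Y) S
  have h₂ : z (S ∪ T) + z Y ≤ z (S ∪ Y) + z T := by
    have e₁ : S ∪ Y ∪ T = S ∪ T := by grind
    have e₂ : (S ∪ Y) ∩ T = Y := by grind
    simpa [e₁, e₂] using hsub (S ∪ Y) T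
  have hSfin : z S ≠ ⊤ := (WithTop.add_ne_top.mp hfin).1
  have hSTfin : z (S ∪ T) ≠ ⊤ := (WithTop.add_ne_top.mp (hST ▸ hfin)).1
  have hSYfin : z (S ∪ Y) ≠ ⊤ := (WithTop.add_ne_top.mp
    (ne_top_of_le_ne_top (WithTop.add_ne_top.mpr ⟨hXYfin, hSfin⟩) h₁)).1
  rw [← WithTop.add_le_add_iff_right (WithTop.add_ne_top.mpr ⟨hSYfin, hSTfin⟩)]
  calc z X + z Y + (z (S ∪ Y) + z (S ∪ T))
      = (z (S ∪ Y) + z X) + (z (S ∪ T) + z Y) := by abel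
    _ ≤ (z (X ∪ Y) + z S) + (z (S ∪ Y) + z T) := add_le_add h₁ h₂
    _ = z (X ∪ Y) + z (S ∩ T) + (z (S ∪ Y) + z (S ∪ T)) := by
      rw [add_add_add_comm, add_assoc, hST]; abel

end Submodular

def Tight {I : Type*} (z : Finset I → WithTop ℝ) (x : I → ℝ) (A : Finset I) : Prop :=
  ((∑ i ∈ A, x i : ℝ) : WithTop ℝ) = z A

namespace Tight

variable {I : Type*} {z : Finset I → WithTop ℝ} {x : I → ℝ}

lemma ne_top {A : Finset I} (h : Tight z x A) : z A ≠ ⊤ :=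
  h ▸ WithTop.coe_ne_top

variable [Fintype I]

lemma of_add_le (hx : x ∈ EGP z) {X Y : Finset I}
    (h : z X + z Y ≤ ((∑ i ∈ X, x i : ℝ) : WithTop ℝ) + ((∑ i ∈ Y, x i : ℝ) : WithTop ℝ)) :
    Tight z x X ∧ Tight z x Y := by
  obtain ⟨hX, hY⟩ := WithTop.coe_eq_and_coe_eq_of_add_le (hx.2 X) (hx.2 Y) h
  exact ⟨hX.symm, hY.symm⟩

variable [DecidableEq I]

lemma union_inter (hsub : Submodular z) (hx : x ∈ EGP z) {S T : Finset I}
    (hS : Tight z x S) (hT : Tight z x T) : Tight z x (S ∪ T) ∧ Tight z x (S ∩ T) := by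
  refine of_add_le hx ((hsub S T).trans ?_)
  rw [← hS, ← hT, ← WithTop.coe_add, ← WithTop.coe_add, Finset.sum_union_inter]

lemma add_eq_union_add_inter (hsub : Submodular z) (hx : x ∈ EGP z) {S T : Finset I}
    (hS : Tight z x S) (hT : Tight z x T) : z S + z T = z (S ∪ T) + z (S ∩ T) := by
  obtain ⟨hU, hI⟩ := hS.union_inter hsub hx hT
  rw [← hS, ← hT, ← hU, ← hI, ← WithTop.coe_add, ← WithTop.coe_add, Finset.sum_union_inter]

end Tight

section Psi

variable {I : Type*} {z : Finset I → WithTop ℝ} {G : Set (I → ℝ)}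

lemma mem_psiFam_iff (hG : G.Nonempty) {A : Finset I} :
    A ∈ PsiFam z G ↔ ∀ x ∈ G, Tight z x A :=
  ⟨fun h => h.2, fun h => ⟨(h _ hG.some_mem).ne_top, h⟩⟩

variable [Fintype I] [DecidableEq I]

lemma isTopologyFam_psiFam (hz0 : z ∅ = 0) (hzI : z Finset.univ ≠ ⊤) (hsub : Submodular z)
    (hGsub : G ⊆ EGP z) : IsTopologyFam (PsiFam z G) := by
  refine ⟨⟨by simp [hz0], fun x _ => by simp [hz0]⟩, ⟨hzI, fun x hx => (hGsub hx).1⟩, ?_, ?_⟩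
  · rintro A ⟨hA, hAG⟩ B ⟨hB, hBG⟩
    exact ⟨(hsub.union_ne_top_and_inter_ne_top hA hB).1,
      fun x hx => (Tight.union_inter hsub (hGsub hx) (hAG x hx) (hBG x hx)).1⟩
  · rintro A ⟨hA, hAG⟩ B ⟨hB, hBG⟩
    exact ⟨(hsub.union_ne_top_and_inter_ne_top hA hB).2,
      fun x hx => (Tight.union_inter hsub (hGsub hx) (hAG x hx) (hBG x hx)).2⟩

lemma compatible_psiPre (hz0 : z ∅ = 0) (hzI : z Finset.univ ≠ ⊤) (hsub : Submodular z)
    (hGsub : G ⊆ EGP z) (hG : G.Nonempty) : Compatible z (PsiPre z G) := by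
  obtain ⟨x, hx⟩ := hG
  have hmem : ∀ {A : Finset I}, (PsiPre z G).IsDownset A → A ∈ PsiFam z G :=
    (isTopologyFam_psiFam hz0 hzI hsub hGsub).mem_of_isDownset
  refine ⟨fun A hA => (hmem hA).1, ?_⟩
  intro A B hA hB _ C₁ C₂ hdisj hC hinc U hU
  have hS : Tight z x (A ∪ C₁) :=
    (hmem (hA.union_of_not_le hB hC fun v hv u hu => (hinc u hu v hv).2)).2 x hx
  have hT : Tight z x (A ∪ C₂) :=
    (hmem (hA.union_of_not_le hB (Finset.union_comm C₁ C₂ ▸ hC)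
      fun u hu v hv => (hinc u hu v hv).1)).2 x hx
  have hST : (A ∪ C₁) ∩ (A ∪ C₂) = A := A.union_inter_union_of_disjoint hdisj
  have hUA : A ∪ U = (A ∪ U ∩ C₁) ∪ (A ∪ U ∩ C₂) := by
    have : U ⊆ C₁ ∪ C₂ := hC ▸ hU
    grind
  have key := Submodular.add_eq_add_of_modular_pair hsub
    (hS.add_eq_union_add_inter hsub (hGsub hx) hT)
    (WithTop.add_ne_top.mpr ⟨hS.ne_top, hT.ne_top⟩)
    (X := A ∪ U ∩ C₁) (Y := A ∪ U ∩ C₂) (by grind) (by grind) (by grind) (by grind)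
  rw [coRes_eq_add_iff (hmem hA).1, hUA, ← key, hST]

lemma conforms_psiPre (hz0 : z ∅ = 0) (hzI : z Finset.univ ≠ ⊤) (hsub : Submodular z)
    (hGsub : G ⊆ EGP z) (hG : G.Nonempty) : Conforms z (PsiPre z G) := by
  refine ⟨compatible_psiPre hz0 hzI hsub hGsub hG, ?_⟩
  intro C hC C₁ C₂ hdisj hunion hsplit u hu v hv
  have hF := isTopologyFam_psiFam hz0 hzI hsub hGsub
  set A := (PsiPre z G).downClosure C \ C
  have hA : A ∈ PsiFam z G := hF.mem_of_isDownset hC.isDownset_downClosure_sdiff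
  have hD : A ∪ C ∈ PsiFam z G := by
    rw [Finset.sdiff_union_of_subset Preo.subset_downClosure]
    exact hF.mem_of_isDownset Preo.isDownset_downClosure
  have hz : z (A ∪ C) + z A = z (A ∪ C₁) + z (A ∪ C₂) := by
    have := hsplit C subset_rfl
    rwa [Finset.inter_eq_right.mpr (hunion ▸ Finset.subset_union_left),
      Finset.inter_eq_right.mpr (hunion ▸ Finset.subset_union_right),
      zConv, zConv, zConv, coRes_eq_add_iff hA.1] at this
  have htight : ∀ x ∈ G, Tight z x (A ∪ C₁) ∧ Tight z x (A ∪ C₂) := by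
    intro x hx
    refine Tight.of_add_le (hGsub hx) (le_of_eq ?_)
    rw [← hz, ← hD.2 x hx, ← hA.2 x hx, ← WithTop.coe_add, ← WithTop.coe_add,
      ← Finset.sum_union_inter (s₁ := A ∪ C₁), ← Finset.union_union_distrib_left, hunion,
      A.union_inter_union_of_disjoint hdisj]
  have hA₁ : A ∪ C₁ ∈ PsiFam z G := (mem_psiFam_iff hG).mpr fun x hx => (htight x hx).1
  have hA₂ : A ∪ C₂ ∈ PsiFam z G := (mem_psiFam_iff hG).mpr fun x hx => (htight x hx).2
  have hC₁ : C₁ ⊆ C := hunion ▸ Finset.subset_union_left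
  have hC₂ : C₂ ⊆ C := hunion ▸ Finset.subset_union_right
  constructor
  · intro huv
    rcases Finset.mem_union.mp (huv _ hA₂ (Finset.mem_union_right A hv)) with huA | huC₂
    · exact (Finset.mem_sdiff.mp huA).2 (hC₁ hu)
    · exact Finset.disjoint_left.mp hdisj hu huC₂
  · intro hvu
    rcases Finset.mem_union.mp (hvu _ hA₁ (Finset.mem_union_right A hu)) with hvA | hvC₁
    · exact (Finset.mem_sdiff.mp hvA).2 (hC₂ hv)
    · exact Finset.disjoint_left.mp hdisj hvC₁ hv

end Psi

theorem psi_of_face_general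
    {I : Type*} [Fintype I] [DecidableEq I]
    (z : Finset I → WithTop ℝ) (hz0 : z ∅ = 0) (hzI : z Finset.univ ≠ ⊤)
    (hsub : Submodular z) (G : Set (I → ℝ))
    (hGsub : G ⊆ EGP z) :
    IsTopologyFam (PsiFam z G) ∧
    (G = ∅ → PsiFam z G = {A : Finset I | z A ≠ ⊤}) ∧
    (G.Nonempty → Conforms z (PsiPre z G)) :=
  ⟨isTopologyFam_psiFam hz0 hzI hsub hGsub,
    fun hG => by simp [PsiFam, hG],
    conforms_psiPre hz0 hzI hsub hGsub⟩

/-- For a face `G` of `Π(z)`: the family `Ψ_z(G)` is a topology on `I`;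
if `G = ∅` then `Ψ_z(G) = top(z) = {A : z(A) < ∞}`; and if `G` is nonempty then the
preorder corresponding to `Ψ_z(G)` conforms to `z`. -/
theorem psi_of_face
    {I : Type*} [Fintype I] [DecidableEq I]
    (z : Finset I → WithTop ℝ) (hz0 : z ∅ = 0) (hzI : z Finset.univ ≠ ⊤)
    (hsub : Submodular z) (G : Set (I → ℝ))
    (hGface : IsExposed ℝ (EGP z) G) (hGsub : G ⊆ EGP z) :
    IsTopologyFam (PsiFam z G) ∧
    (G = ∅ → PsiFam z G = {A : Finset I | z A ≠ ⊤}) ∧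
    (G.Nonempty → Conforms z (PsiPre z G)) :=
  psi_of_face_general z hz0 hzI hsub G hGsub
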